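/- Let Ψ be a complex vector indexed by Fin m × Fin n and let v : Fin m → ℂ be a unit vector. If ptr₂(ΨΨᴴ) = vvᴴ, then there exists a unit vector w : Fin n → ℂ such that Ψ(i,j) = v i · w j for all i, j. That is, if the marginal of a bipartite state vector on the first system is pure, then the bipartite state is a product state. -/

import Mathlib

open Matrix

noncomputable section

/-- Partial trace over the second tensor factor. -/
def ptr2 {m n : ℕ} (X : Matrix (Fin m × Fin n) (Fin m × Fin n) ℂ) :
    Matrix (Fin m) (Fin m) ℂ :=
  Matrix.of fun i j => ∑ k : Fin n, X (i, k) (j, k)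

/-- outer product `v vᴴ` of a complex vector with itself. -/
def outerC {α : Type*} (v : α → ℂ) : Matrix α α ℂ :=
  Matrix.of fun a b => v a * star (v b)

/-! Reshape `Ψ` into the `m × n` matrix `M`, so that `ptr₂(ΨΨᴴ) = MMᴴ`. Since `v` is a unit
vector, `P = vvᴴ` is idempotent, and the hypothesis `MMᴴ = P` gives
`((1 - P)M)((1 - P)M)ᴴ = (1 - P)P(1 - P)ᴴ = 0`. Hence `M = PM = v (vᴴM)`, and `w = vᴴM` has
`wwᴴ = vᴴ(MMᴴ)v = 1`. -/

namespace Matrix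

variable {R α β : Type*} [Fintype α] [Fintype β]

section Ring

variable [Ring R] [StarRing R]

lemma vecMulVec_star_mul_self {v : α → R} (hv : star v ⬝ᵥ v = 1) :
    vecMulVec v (star v) * vecMulVec v (star v) = vecMulVec v (star v) := by
  rw [vecMulVec_mul_vecMulVec, hv, one_smul]

lemma vecMulVec_star_mulVec_self {v : α → R} (hv : star v ⬝ᵥ v = 1) :
    vecMulVec v (star v) *ᵥ v = v := by
  rw [vecMulVec_mulVec, hv, MulOpposite.op_one, one_smul]

lemma vecMul_dotProduct_star_vecMul_eq_one {M : Matrix α β R} {v : α → R}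
    (hv : star v ⬝ᵥ v = 1) (hM : M * Mᴴ = vecMulVec v (star v)) :
    (star v ᵥ* M) ⬝ᵥ star (star v ᵥ* M) = 1 := by
  rw [star_vecMul, star_star, ← dotProduct_mulVec, mulVec_mulVec, hM,
    vecMulVec_star_mulVec_self hv, hv]

variable [PartialOrder R] [StarOrderedRing R] [NoZeroDivisors R] [DecidableEq α]

lemma eq_vecMulVec_of_mul_conjTranspose_eq {M : Matrix α β R} {v : α → R}
    (hv : star v ⬝ᵥ v = 1) (hM : M * Mᴴ = vecMulVec v (star v)) :
    M = vecMulVec v (star v ᵥ* M) := by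
  set P := vecMulVec v (star v)
  have hPP : (1 - P) * P = 0 := by rw [sub_mul, one_mul, vecMulVec_star_mul_self hv, sub_self]
  have hD : ((1 - P) * M) * ((1 - P) * M)ᴴ = 0 := calc
    ((1 - P) * M) * ((1 - P) * M)ᴴ = (1 - P) * (M * Mᴴ) * (1 - P)ᴴ := by
      simp only [conjTranspose_mul, Matrix.mul_assoc]
    _ = 0 := by rw [hM, hPP, Matrix.zero_mul]
  rwa [self_mul_conjTranspose_eq_zero, Matrix.sub_mul, Matrix.one_mul, vecMulVec_mul,
    sub_eq_zero] at hD

end Ring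

lemma star_dotProduct_self_eq_sum_norm_sq {𝕜 : Type*} [RCLike 𝕜] (v : α → 𝕜) :
    star v ⬝ᵥ v = ((∑ a, ‖v a‖ ^ 2 : ℝ) : 𝕜) := by
  simp [dotProduct, RCLike.conj_mul]

end Matrix

open scoped ComplexOrder

lemma outerC_eq_vecMulVec {α : Type*} (v : α → ℂ) : outerC v = vecMulVec v (star v) := rfl

lemma ptr2_outerC {m n : ℕ} (Ψ : Fin m × Fin n → ℂ) :
    ptr2 (outerC Ψ) = of (Function.curry Ψ) * (of (Function.curry Ψ))ᴴ := by
  ext i j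
  simp [ptr2, outerC, mul_apply]

theorem stmt19 {m n : ℕ} (Ψ : Fin m × Fin n → ℂ) (v : Fin m → ℂ)
    (hv : ∑ a, ‖v a‖ ^ 2 = 1)
    (h : ptr2 (outerC Ψ) = outerC v) :
    ∃ w : Fin n → ℂ, (∑ j, ‖w j‖ ^ 2 = 1) ∧ ∀ i j, Ψ (i, j) = v i * w j := by
  set M := of (Function.curry Ψ)
  have hv' : star v ⬝ᵥ v = 1 := by
    rw [star_dotProduct_self_eq_sum_norm_sq, hv, RCLike.ofReal_one]
  have hM : M * Mᴴ = vecMulVec v (star v) := by rw [← ptr2_outerC, h, outerC_eq_vecMulVec]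
  refine ⟨star v ᵥ* M, ?_, fun i j => ?_⟩
  · have hw := vecMul_dotProduct_star_vecMul_eq_one hv' hM
    rw [dotProduct_comm, star_dotProduct_self_eq_sum_norm_sq] at hw
    exact RCLike.ofReal_injective (hw.trans RCLike.ofReal_one.symm)
  · exact congrFun₂ (eq_vecMulVec_of_mul_conjTranspose_eq hv' hM) i j

end
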